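/- Fix η > 0 and define the 2×2 matrix function m by m₁₁(u) = √η · J_{u−1/2}(2η) · η^{−u} Γ(u+1/2), m₁₂(u) = √η · J_{−u+1/2}(2η) · η^{u} Γ(−u+1/2), m₂₁(u) = −√η · J_{u+1/2}(2η) · η^{−u} Γ(u+1/2), m₂₂(u) = √η · J_{−u−1/2}(2η) · η^{u} Γ(−u+1/2). Then m satisfies the conditions of the discrete Riemann–Hilbert problem associated to the Plancherel data with parameter η: m₁₁ and m₂₁ are analytic on ℂ∖ℤ′₋ with at most simple poles at the points of ℤ′₋; m₁₂ and m₂₂ are analytic on ℂ∖ℤ′₊ with at most simple poles at the points of ℤ′₊; for every x ∈ ℤ′₋, Res_{u=x} m₁₁ = −h_II(x)² m₁₂(x) and Res_{u=x} m₂₁ = −h_II(x)² m₂₂(x); and for every x ∈ ℤ′₊, Res_{u=x} m₁₂ = −h_I(x)² m₁₁(x) and Res_{u=x} m₂₂ = −h_I(x)² m₂₁(x). -/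

import Mathlib

noncomputable section

open scoped Topology

/-- The positive half-integers ℤ′₊ = {1/2, 3/2, …}, as a subset of ℂ. -/
def Zp : Set ℂ := {u | ∃ n : ℕ, u = (n : ℂ) + 1/2}

/-- The negative half-integers ℤ′₋ = {−1/2, −3/2, …}, as a subset of ℂ. -/
def Zm : Set ℂ := {u | ∃ n : ℕ, u = -((n : ℂ) + 1/2)}

/-- Plancherel data: `hI η x = η^x / Γ(x + 1/2)`, where `η^x = exp(x log η)`. -/
def hI (η : ℝ) (x : ℂ) : ℂ := Complex.exp (x * Real.log η) / Complex.Gamma (x + 1/2)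

/-- Plancherel data: `hII η x = η^{−x} / Γ(−x + 1/2)`. -/
def hII (η : ℝ) (x : ℂ) : ℂ := Complex.exp (-x * Real.log η) / Complex.Gamma (-x + 1/2)

/-- The 2×2 matrix function `m = (m_{ij})` satisfies the conditions of the discrete
Riemann–Hilbert problem associated to the Plancherel data with parameter `η`:
`m₁₁, m₂₁` are analytic off ℤ′₋ with at most simple poles at ℤ′₋, `m₁₂, m₂₂` are analytic
off ℤ′₊ with at most simple poles at ℤ′₊, and the residues (limits of `(u−x)·m_{ij}(u)`)
are as prescribed. -/
def PlancherelDRHP (η : ℝ) (m11 m12 m21 m22 : ℂ → ℂ) : Prop :=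
  (∀ z ∉ Zm, AnalyticAt ℂ m11 z) ∧
  (∀ z ∉ Zm, AnalyticAt ℂ m21 z) ∧
  (∀ z ∉ Zp, AnalyticAt ℂ m12 z) ∧
  (∀ z ∉ Zp, AnalyticAt ℂ m22 z) ∧
  (∀ x ∈ Zm, Filter.Tendsto (fun u => (u - x) * m11 u) (𝓝[≠] x)
    (𝓝 (-(hII η x) ^ 2 * m12 x))) ∧
  (∀ x ∈ Zm, Filter.Tendsto (fun u => (u - x) * m21 u) (𝓝[≠] x)
    (𝓝 (-(hII η x) ^ 2 * m22 x))) ∧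
  (∀ x ∈ Zp, Filter.Tendsto (fun u => (u - x) * m12 u) (𝓝[≠] x)
    (𝓝 (-(hI η x) ^ 2 * m11 x))) ∧
  (∀ x ∈ Zp, Filter.Tendsto (fun u => (u - x) * m22 u) (𝓝[≠] x)
    (𝓝 (-(hI η x) ^ 2 * m21 x)))

/-- The Bessel function of the first kind: `besselJ ν t = J_ν(2t)` for `t > 0`,
given by the series Σ_{m≥0} (−1)^m t^{2m+ν} / (m! Γ(m+ν+1)), with t^{2m+ν} = exp((2m+ν) log t)
and 1/Γ vanishing at the poles of Γ. -/
def besselJ (ν : ℂ) (t : ℝ) : ℂ :=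
  ∑' m : ℕ, (-1 : ℂ) ^ m * Complex.exp ((2 * (m : ℂ) + ν) * Real.log t) /
    ((Nat.factorial m : ℂ) * Complex.Gamma ((m : ℂ) + ν + 1))


/-!
Since `ν ↦ J_ν(2η)` is entire (its series converges locally uniformly in `ν`: `1/Γ` is entire and
`‖1/Γ(m + ν + 1)‖` is bounded in `m` locally uniformly in `ν`), every entry is analytic away from
the simple poles of its factor `Γ(±u + 1/2)`. The reflection `u ↦ -u` exchanges `m₁₁ ↔ m₂₂` and
`m₂₁ ↔ -m₁₂` and turns `h_II` into `h_I`, so only the residues at `x = -n - 1/2 ∈ ℤ′₋` need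
checking.
There `Γ(u + 1/2)` has residue `(-1)ⁿ/n!` and the Bessel factor has integer order `-k`, where
`J_{-k} = (-1)^k J_k` because `1/Γ` kills the first `k` terms of the series; the signs then combine
into `-h_II(x)²`.
-/

open Complex Filter
open scoped Nat

theorem analyticAt_Gamma {s : ℂ} (hs : ∀ m : ℕ, s ≠ -m) : AnalyticAt ℂ Gamma s := by
  simpa [Pi.inv_def] using
    (differentiable_one_div_Gamma.analyticAt s).inv (inv_ne_zero (Gamma_ne_zero hs))

theorem tendsto_add_const_nhdsNE {a b : ℂ} (c : ℂ) (h : a + c = b) :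
    Tendsto (· + c) (𝓝[≠] a) (𝓝[≠] b) :=
  h ▸ map_add_right_nhdsNE.le

theorem tendsto_add_mul_Gamma_nhdsNE_neg_nat (n : ℕ) :
    Tendsto (fun z => (z + n) * Gamma z) (𝓝[≠] (-n)) (𝓝 ((-1) ^ n / n !)) := by
  induction n with
  | zero => simpa using tendsto_self_mul_Gamma_nhds_zero
  | succ n ih =>
    have hne : -((n + 1 : ℕ) : ℂ) ≠ 0 := by norm_cast
    have hshift :=
      tendsto_add_const_nhdsNE 1 (show -((n + 1 : ℕ) : ℂ) + 1 = -n by push_cast; ring)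
    have hinv : Tendsto (·⁻¹) (𝓝[≠] (-((n + 1 : ℕ) : ℂ))) (𝓝 (-((n + 1 : ℕ) : ℂ))⁻¹) :=
      (continuousAt_inv₀ hne).tendsto.mono_left nhdsWithin_le_nhds
    have hev : ∀ᶠ z in 𝓝[≠] (-((n + 1 : ℕ) : ℂ)),
        (z + 1 + n) * Gamma (z + 1) * z⁻¹ = (z + (n + 1 : ℕ)) * Gamma z := by
      filter_upwards [nhdsWithin_le_nhds (eventually_ne_nhds hne)] with z hz
      rw [Gamma_add_one z hz]
      field_simp
      push_cast
      ring
    convert ((ih.comp hshift).mul hinv).congr' hev using 2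
    push_cast [Nat.factorial_succ]
    field_simp
    ring

theorem tendsto_sub_mul_Gamma_add_nhdsNE (n : ℕ) (c : ℂ) :
    Tendsto (fun u => (u - (-n - c)) * Gamma (u + c)) (𝓝[≠] (-n - c)) (𝓝 ((-1) ^ n / n !)) := by
  refine (tendsto_add_mul_Gamma_nhdsNE_neg_nat n |>.comp
    (tendsto_add_const_nhdsNE c (by ring))).congr fun u => ?_
  simp only [Function.comp_apply]
  ring_nf

def besselTerm (t : ℝ) (m : ℕ) (ν : ℂ) : ℂ :=
  (-1 : ℂ) ^ m * exp ((2 * (m : ℂ) + ν) * Real.log t) / ((m ! : ℂ) * Gamma ((m : ℂ) + ν + 1))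

theorem besselJ_eq_tsum (ν : ℂ) (t : ℝ) : besselJ ν t = ∑' m, besselTerm t m ν := rfl

theorem differentiable_besselTerm (t : ℝ) (m : ℕ) : Differentiable ℂ (besselTerm t m) := by
  have hΓ : Differentiable ℂ fun ν : ℂ => (Gamma (m + ν + 1))⁻¹ := by
    have hshift : Differentiable ℂ fun ν : ℂ => (m : ℂ) + ν + 1 := by fun_prop
    simpa [Function.comp_def] using differentiable_one_div_Gamma.comp hshift
  unfold besselTerm
  simp only [div_eq_mul_inv, mul_inv]
  fun_prop

theorem exists_norm_inv_Gamma_nat_add_le (R : ℝ) :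
    ∃ M, ∀ ν : ℂ, ‖ν‖ ≤ R → ∀ m : ℕ, ‖(Gamma (m + ν + 1))⁻¹‖ ≤ M := by
  set N := ⌈R⌉₊
  have hcont : Continuous fun s => (Gamma s)⁻¹ := by
    simpa using differentiable_one_div_Gamma.continuous
  obtain ⟨M, hM⟩ :=
    (isCompact_closedBall (0 : ℂ) (N + R + 1)).exists_bound_of_continuousOn hcont.continuousOn
  refine ⟨M, fun ν hν m => ?_⟩
  -- beyond `⌈R⌉` we have `‖m + ν + 1‖ ≥ 1`, so `Γ(s + 1) = s Γ(s)` only shrinks `‖1/Γ‖`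
  have hball : ∀ m ≤ N, ‖(Gamma (m + ν + 1))⁻¹‖ ≤ M := fun m hm => by
    refine hM _ (mem_closedBall_zero_iff.2 ?_)
    calc ‖(m : ℂ) + ν + 1‖ ≤ m + ‖ν‖ + 1 := by
          simpa using (norm_add₃_le (a := (m : ℂ)) (b := ν) (c := 1))
      _ ≤ N + R + 1 := by gcongr
  induction m with
  | zero => exact hball 0 N.zero_le
  | succ k ih =>
    rcases le_or_gt (k + 1) N with hk | hk
    · exact hball _ hk
    have hRk : R ≤ k := (Nat.le_ceil R).trans (by exact_mod_cast Nat.lt_succ_iff.1 hk)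
    have hs : 1 ≤ ‖(k : ℂ) + ν + 1‖ := by
      have := norm_sub_norm_le ((k : ℂ) + 1) (-ν)
      rw [sub_neg_eq_add, add_right_comm, norm_neg] at this
      have hk1 : ‖(k : ℂ) + 1‖ = k + 1 := by norm_cast
      linarith
    have hs0 : (k : ℂ) + ν + 1 ≠ 0 := norm_pos_iff.1 (by linarith)
    calc ‖(Gamma ((k + 1 : ℕ) + ν + 1))⁻¹‖
        = ‖(k : ℂ) + ν + 1‖⁻¹ * ‖(Gamma (k + ν + 1))⁻¹‖ := by
          rw [show ((k + 1 : ℕ) : ℂ) + ν + 1 = (k + ν + 1) + 1 by push_cast; ring,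
            Gamma_add_one _ hs0, mul_inv, norm_mul, norm_inv]
      _ ≤ 1 * M := by gcongr; exact inv_le_one_of_one_le₀ hs
      _ = M := one_mul M

theorem norm_besselTerm_le (t : ℝ) (m : ℕ) {ν : ℂ} {R M : ℝ} (hν : ‖ν‖ ≤ R)
    (hΓ : ‖(Gamma (m + ν + 1))⁻¹‖ ≤ M) :
    ‖besselTerm t m ν‖ ≤
      M * Real.exp (R * |Real.log t|) * (Real.exp (2 * Real.log t) ^ m / m !) := by
  set L := Real.log t
  have hexp : ‖exp ((2 * m + ν) * L)‖ ≤ Real.exp (R * |L|) * Real.exp (2 * L) ^ m := by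
    rw [norm_exp, ← Real.exp_nat_mul, ← Real.exp_add]
    gcongr
    have hνL : ν.re * L ≤ R * |L| :=
      calc ν.re * L ≤ |ν.re| * |L| := by rw [← abs_mul]; exact le_abs_self _
        _ ≤ R * |L| := by gcongr; exact (abs_re_le_norm ν).trans hν
    have hre : ((2 * m + ν) * L).re = 2 * m * L + ν.re * L := by simp; ring
    linarith
  calc ‖besselTerm t m ν‖ = ‖exp ((2 * m + ν) * L)‖ * ‖(Gamma (m + ν + 1))⁻¹‖ / m ! := by
        simp only [besselTerm, norm_div, norm_mul, norm_pow, norm_neg, norm_one, one_pow,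
          one_mul, norm_inv, norm_natCast]
        ring
    _ ≤ Real.exp (R * |L|) * Real.exp (2 * L) ^ m * M / m ! := by gcongr
    _ = _ := by ring

theorem summable_besselTerm_bound (t R M : ℝ) :
    Summable fun m : ℕ =>
      M * Real.exp (R * |Real.log t|) * (Real.exp (2 * Real.log t) ^ m / m !) :=
  (Real.summable_pow_div_factorial _).mul_left _

theorem summable_besselTerm (t : ℝ) (ν : ℂ) : Summable (besselTerm t · ν) := by
  obtain ⟨M, hM⟩ := exists_norm_inv_Gamma_nat_add_le ‖ν‖
  exact (summable_besselTerm_bound t ‖ν‖ M).of_norm_bounded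
    fun m => norm_besselTerm_le t m le_rfl (hM ν le_rfl m)

theorem differentiable_besselJ (t : ℝ) : Differentiable ℂ fun ν => besselJ ν t := by
  intro ν₀
  set R := ‖ν₀‖ + 1
  obtain ⟨M, hM⟩ := exists_norm_inv_Gamma_nat_add_le R
  have hR : ∀ ν ∈ Metric.ball (0 : ℂ) R, ‖ν‖ ≤ R := fun ν hν => (mem_ball_zero_iff.1 hν).le
  have hdiff := differentiableOn_tsum_of_summable_norm (summable_besselTerm_bound t R M)
    (fun m => (differentiable_besselTerm t m).differentiableOn) Metric.isOpen_ball
    fun m ν hν => norm_besselTerm_le t m (hR ν hν) (hM ν (hR ν hν) m)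
  exact hdiff.differentiableAt (Metric.isOpen_ball.mem_nhds (by simp [R]))

theorem besselJ_neg_nat (k : ℕ) (t : ℝ) : besselJ (-k) t = (-1) ^ k * besselJ k t := by
  have hhead : ∀ m ∈ Finset.range k, besselTerm t m (-k) = 0 := by
    intro m hm
    obtain ⟨d, rfl⟩ := Nat.exists_eq_add_of_lt (Finset.mem_range.1 hm)
    rw [besselTerm, show (m : ℂ) + -((m + d + 1 : ℕ) : ℂ) + 1 = -d by push_cast; ring,
      Gamma_neg_nat_eq_zero, mul_zero, div_zero]
  have htail : ∀ j : ℕ, besselTerm t (j + k) (-k) = (-1) ^ k * besselTerm t j k := by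
    intro j
    rw [besselTerm, besselTerm, show ((j + k : ℕ) : ℂ) + -k + 1 = (j : ℂ) + 1 by push_cast; ring,
      show (j : ℂ) + k + 1 = ((j + k : ℕ) : ℂ) + 1 by push_cast; ring,
      Gamma_nat_eq_factorial, Gamma_nat_eq_factorial, pow_add]
    push_cast
    ring_nf
  rw [besselJ_eq_tsum, besselJ_eq_tsum, ← (summable_besselTerm t _).sum_add_tsum_nat_add k,
    Finset.sum_eq_zero hhead, zero_add, tsum_congr htail, tsum_mul_left]

theorem neg_mem_Zm_iff {z : ℂ} : -z ∈ Zm ↔ z ∈ Zp :=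
  exists_congr fun _ => neg_inj

theorem hII_neg (η : ℝ) (x : ℂ) : hII η (-x) = hI η x := by
  simp only [hII, hI, neg_neg]

theorem PlancherelDRHP.of_neg_symm {η : ℝ} {m11 m12 m21 m22 : ℂ → ℂ}
    (h12 : ∀ u, m12 u = -m21 (-u)) (h22 : ∀ u, m22 u = m11 (-u))
    (ha11 : ∀ z ∉ Zm, AnalyticAt ℂ m11 z) (ha21 : ∀ z ∉ Zm, AnalyticAt ℂ m21 z)
    (hr11 : ∀ x ∈ Zm, Tendsto (fun u => (u - x) * m11 u) (𝓝[≠] x)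
      (𝓝 (-(hII η x) ^ 2 * m12 x)))
    (hr21 : ∀ x ∈ Zm, Tendsto (fun u => (u - x) * m21 u) (𝓝[≠] x)
      (𝓝 (-(hII η x) ^ 2 * m22 x))) :
    PlancherelDRHP η m11 m12 m21 m22 := by
  obtain rfl : m12 = fun u => -m21 (-u) := funext h12
  obtain rfl : m22 = fun u => m11 (-u) := funext h22
  refine ⟨ha11, ha21, fun z hz => ?_, fun z hz => ?_, hr11, hr21, fun x hx => ?_, fun x hx => ?_⟩
  · exact ((ha21 (-z) (neg_mem_Zm_iff.not.2 hz)).comp analyticAt_id.neg).neg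
  · exact (ha11 (-z) (neg_mem_Zm_iff.not.2 hz)).comp analyticAt_id.neg
  · have := (hr21 (-x) (neg_mem_Zm_iff.2 hx)).comp (neg_nhdsNE (a := x)).le
    simp only [hII_neg, neg_neg] at this
    exact this.congr fun u => by simp only [Function.comp_apply]; ring
  · have := ((hr11 (-x) (neg_mem_Zm_iff.2 hx)).comp (neg_nhdsNE (a := x)).le).neg
    simp only [hII_neg, neg_neg] at this
    convert this.congr (f₂ := fun u => (u - x) * m11 (-u)) fun u => by
      simp only [Function.comp_apply]; ring using 2
    ring

def besselGammaEntry (η : ℝ) (s u : ℂ) : ℂ :=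
  Real.sqrt η * besselJ (u + s) η * (exp (-u * Real.log η) * Gamma (u + 1/2))

theorem analyticAt_besselGammaEntry (η : ℝ) (s : ℂ) {z : ℂ} (hz : z ∉ Zm) :
    AnalyticAt ℂ (besselGammaEntry η s) z := by
  have hΓ : AnalyticAt ℂ (fun u => Gamma (u + 1/2)) z :=
    (analyticAt_Gamma fun m hm => hz ⟨m, by linear_combination hm⟩).comp (by fun_prop)
  have hJ : AnalyticAt ℂ (fun u => besselJ (u + s) η) z :=
    ((differentiable_besselJ η).analyticAt _).comp (by fun_prop)
  unfold besselGammaEntry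
  fun_prop

theorem tendsto_sub_mul_besselGammaEntry (η : ℝ) (s : ℂ) {x : ℂ} {n k : ℕ}
    (hx : x + 1/2 = -n) (hk : x + s = -k) :
    Tendsto (fun u => (u - x) * besselGammaEntry η s u) (𝓝[≠] x)
      (𝓝 ((-1) ^ (n + k) * hII η x ^ 2 * besselGammaEntry η (-s) (-x))) := by
  have hJ : Continuous fun ν => besselJ ν η := (differentiable_besselJ η).continuous
  have hB : Continuous fun u => Real.sqrt η * besselJ (u + s) η * exp (-u * Real.log η) := by
    fun_prop
  obtain rfl : x = -n - 1/2 := by linear_combination hx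
  have := (hB.continuousAt.tendsto.mono_left nhdsWithin_le_nhds).mul
    (tendsto_sub_mul_Gamma_add_nhdsNE n (1/2))
  convert this.congr (f₂ := fun u => (u - (-n - 1/2)) * besselGammaEntry η s u)
    (fun u => by simp only [besselGammaEntry]; ring) using 2
  have hJk : besselJ (-n - 1/2 + s) η = (-1) ^ k * besselJ k η := by
    rw [hk]; exact besselJ_neg_nat k η
  have hJk' : besselJ (-(-n - 1/2) + -s) η = besselJ k η := by
    congr 1; linear_combination -hk
  have hΓ : Gamma (-(-n - 1/2) + 1/2) = n ! := by
    rw [show -(-n - 1/2) + 1/2 = (n : ℂ) + 1 by ring]; exact Gamma_nat_eq_factorial n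
  have he : exp (-(-(-n - 1/2)) * Real.log η) = (exp (-(-n - 1/2) * Real.log η))⁻¹ := by
    rw [← exp_neg]; ring_nf
  simp only [besselGammaEntry, hII, hJk, hJk', hΓ, he]
  field_simp
  ring

theorem statement16_general (η : ℝ) :
    PlancherelDRHP η
      (fun u => (Real.sqrt η : ℂ) * besselJ (u - 1/2) η *
        (Complex.exp (-u * Real.log η) * Complex.Gamma (u + 1/2)))
      (fun u => (Real.sqrt η : ℂ) * besselJ (-u + 1/2) η *
        (Complex.exp (u * Real.log η) * Complex.Gamma (-u + 1/2)))
      (fun u => -((Real.sqrt η : ℂ) * besselJ (u + 1/2) η *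
        (Complex.exp (-u * Real.log η) * Complex.Gamma (u + 1/2))))
      (fun u => (Real.sqrt η : ℂ) * besselJ (-u - 1/2) η *
        (Complex.exp (u * Real.log η) * Complex.Gamma (-u + 1/2))) := by
  have key : PlancherelDRHP η (besselGammaEntry η (-(1/2))) (fun u => besselGammaEntry η (1/2) (-u))
      (fun u => -besselGammaEntry η (1/2) u) (fun u => besselGammaEntry η (-(1/2)) (-u)) := by
    refine .of_neg_symm (fun u => (neg_neg _).symm) (fun u => rfl)
      (fun z hz => analyticAt_besselGammaEntry η _ hz)
      (fun z hz => (analyticAt_besselGammaEntry η _ hz).neg) ?_ ?_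
    · rintro x ⟨n, rfl⟩
      convert tendsto_sub_mul_besselGammaEntry η (-(1/2)) (x := -(n + 1/2)) (n := n) (k := n + 1)
        (by ring) (by push_cast; ring) using 2
      simp [(show Odd (n + (n + 1)) from ⟨n, by ring⟩).neg_one_pow]
    · rintro x ⟨n, rfl⟩
      convert (tendsto_sub_mul_besselGammaEntry η (1/2) (x := -(n + 1/2)) (n := n) (k := n)
        (by ring) (by ring)).neg using 2
      · ring
      · rw [Even.neg_one_pow ⟨n, rfl⟩]
        ring
  convert key using 1 <;> funext u <;> simp only [besselGammaEntry] <;> ring_nf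

theorem statement16 (η : ℝ) (hη : 0 < η) :
    PlancherelDRHP η
      (fun u => (Real.sqrt η : ℂ) * besselJ (u - 1/2) η *
        (Complex.exp (-u * Real.log η) * Complex.Gamma (u + 1/2)))
      (fun u => (Real.sqrt η : ℂ) * besselJ (-u + 1/2) η *
        (Complex.exp (u * Real.log η) * Complex.Gamma (-u + 1/2)))
      (fun u => -((Real.sqrt η : ℂ) * besselJ (u + 1/2) η *
        (Complex.exp (-u * Real.log η) * Complex.Gamma (u + 1/2))))
      (fun u => (Real.sqrt η : ℂ) * besselJ (-u - 1/2) η *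
        (Complex.exp (u * Real.log η) * Complex.Gamma (-u + 1/2))) :=
  statement16_general η
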